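/- arXiv:1411.4923 — 2 statements merged into one kernel-verified Lean document; each statement's English description precedes it below -/
import Mathlib

section
/- For m ≥ 1 let u^{2m−1} = ⟨u_{2m−1}, u_{2m−3}, …, u₁, u₋₁, u₋₃, u₋₅, …⟩ be a sequence of maps in C(Ω̄; l∞) ∩ C¹(Ω; l∞), each of which is L-analytic (here the functions u_k : Ω̄ → ℂ, k odd, are fixed, and u^{2m−1} is obtained by augmenting ⟨u₋₁, u₋₃, u₋₅, …⟩ by the m terms u_{2m−1}, u_{2m−3}, …, u₁). Assume that for every m ≥ 1 the boundary traces satisfy u_{2m−1}|_Γ = conj(u_{−(2m−1)})|_Γ. Then u_{2m−1}(z) = conj(u_{−(2m−1)}(z)) for all z ∈ Ω and all m ≥ 1. -/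
noncomputable section

open Complex MeasureTheory Filter Topology Metric Set

namespace RangeDoppler

/-- The Cauchy–Riemann operator `∂̄ = (∂_{x₁} + i ∂_{x₂})/2` acting on maps `ℂ → ℂ`,
identifying `ℝ²` with `ℂ`. -/
def dbar (f : ℂ → ℂ) (z : ℂ) : ℂ :=
  (fderiv ℝ f z 1 + Complex.I * fderiv ℝ f z Complex.I) / 2

/-- The Cauchy–Riemann operator `∂ = (∂_{x₁} − i ∂_{x₂})/2`. -/
def ddz (f : ℂ → ℂ) (z : ℂ) : ℂ :=
  (fderiv ℝ f z 1 - Complex.I * fderiv ℝ f z Complex.I) / 2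

/-- The gradient of a real-valued function on the plane, encoded as a complex number
`∂₁ f + i ∂₂ f`. -/
def gradC (f : ℂ → ℝ) (z : ℂ) : ℂ :=
  (fderiv ℝ f z 1 : ℝ) + (fderiv ℝ f z Complex.I : ℝ) * Complex.I

/-- Euclidean dot product of two vectors of `ℝ²` encoded as complex numbers. -/
def dotJ (θ w : ℂ) : ℝ := θ.re * w.re + θ.im * w.im

/- In all that follows, a sequence-valued map `u : ℕ → ℂ → ℂ` encodes
`⟨u₋₁, u₋₂, u₋₃, …⟩`, the component `u n` being `u₋₍ₙ₊₁₎`. -/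

/-- `u = ⟨u₋₁, u₋₂, …⟩` is bounded and continuous in the `l∞`-norm on `S`. -/
def SeqContLinf (S : Set ℂ) (u : ℕ → ℂ → ℂ) : Prop :=
  (∀ z ∈ S, BddAbove (Set.range fun n => ‖u n z‖)) ∧
  ∀ z₀ ∈ S, ∀ ε > 0, ∃ δ > 0, ∀ z ∈ S, dist z z₀ < δ →
    ∀ n, ‖u n z - u n z₀‖ < ε

/-- `u = ⟨u₋₁, u₋₂, …⟩` is (pointwise summable and) continuous in the `l₁`-norm on `S`. -/
def SeqContL1 (S : Set ℂ) (u : ℕ → ℂ → ℂ) : Prop :=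
  (∀ z ∈ S, Summable fun n => ‖u n z‖) ∧
  ∀ z₀ ∈ S, ∀ ε > 0, ∃ δ > 0, ∀ z ∈ S, dist z z₀ < δ →
    (∑' n, ‖u n z - u n z₀‖) < ε

/-- `u` is `L^k`-analytic on `Ω` (k = 1, 2): `u ∈ C(Ω̄; l∞) ∩ C¹(Ω; l∞)` and
`∂̄ u + L^k ∂ u = 0` on `Ω`, where `L` is the left shift. -/
def IsLkAnalytic (k : ℕ) (Ω : Set ℂ) (u : ℕ → ℂ → ℂ) : Prop :=
  SeqContLinf (closure Ω) u ∧ (∀ n, ContDiffOn ℝ 1 (u n) Ω) ∧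
  ∀ n, ∀ z ∈ Ω, dbar (u n) z + ddz (u (n + k)) z = 0

/-- `u ∈ l^{1,k}_∞(Γ)`: `sup_{ζ∈Γ} Σ_j j^k |u₋ⱼ(ζ)| < ∞`. -/
def MemL1k (k : ℕ) (Γ : Set ℂ) (u : ℕ → ℂ → ℂ) : Prop :=
  (∀ ζ ∈ Γ, Summable fun j : ℕ => ((j : ℝ) + 1) ^ k * ‖u j ζ‖) ∧
  ∃ C : ℝ, ∀ ζ ∈ Γ, (∑' j : ℕ, ((j : ℝ) + 1) ^ k * ‖u j ζ‖) ≤ C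

/-- `u ∈ C^α(Γ; l₁)`: bounded and `α`-Hölder continuous in the `l₁`-norm. -/
def MemCalphaL1 (α : ℝ) (Γ : Set ℂ) (u : ℕ → ℂ → ℂ) : Prop :=
  (∀ ζ ∈ Γ, Summable fun j : ℕ => ‖u j ζ‖) ∧
  (∃ C : ℝ, ∀ ζ ∈ Γ, (∑' j : ℕ, ‖u j ζ‖) ≤ C) ∧
  ∃ C : ℝ, ∀ ζ ∈ Γ, ∀ η ∈ Γ, (∑' j : ℕ, ‖u j ζ - u j η‖) ≤ C * dist ζ η ^ α

/-- `u ∈ Y_α`: `u ∈ l^{1,2}_∞(Γ)` together with the weighted Hölder estimate. -/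
def MemYalpha (α : ℝ) (Γ : Set ℂ) (u : ℕ → ℂ → ℂ) : Prop :=
  MemL1k 2 Γ u ∧
  ∃ C : ℝ, ∀ ζ ∈ Γ, ∀ η ∈ Γ,
    (∑' j : ℕ, ((j : ℝ) + 1) * ‖u j ζ - u j η‖) ≤ C * dist ζ η ^ α

/-- Contour integral `∫_Γ f(ζ) dζ` along the parametrized curve `γ`. -/
def cInt (γ : ℝ → ℂ) (f : ℂ → ℂ) : ℂ := ∫ t in (0:ℝ)..1, f (γ t) * deriv γ t

/-- Contour integral `∫_Γ f(ζ) dζ̄` along the parametrized curve `γ`. -/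
def cIntConj (γ : ℝ → ℂ) (f : ℂ → ℂ) : ℂ :=
  ∫ t in (0:ℝ)..1, f (γ t) * (starRingEnd ℂ) (deriv γ t)

/-- `γ` is a regular `C¹` periodic parametrization of the boundary `Γ = ∂Ω`. -/
def IsBoundaryParam (Ω : Set ℂ) (γ : ℝ → ℂ) : Prop :=
  ContDiff ℝ 1 γ ∧ (∀ t, γ (t + 1) = γ t) ∧ γ '' Set.Ico 0 1 = frontier Ω ∧
  Set.InjOn γ (Set.Ico 0 1) ∧ ∀ t, deriv γ t ≠ 0

/-- The Bukhgeim–Cauchy operator: `bukhCauchy γ g n z` is `(Bg)₋₍ₙ₊₁₎(z)`. -/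
def bukhCauchy (γ : ℝ → ℂ) (g : ℕ → ℂ → ℂ) (n : ℕ) (z : ℂ) : ℂ :=
  (1 / (2 * (Real.pi : ℂ) * Complex.I)) *
    ((∑' j : ℕ, cInt γ fun ζ => g (n + j) ζ * ((starRingEnd ℂ) (ζ - z)) ^ j / (ζ - z) ^ (j + 1)) -
      ∑' j : ℕ, cIntConj γ fun ζ => g (n + 1 + j) ζ * ((starRingEnd ℂ) (ζ - z)) ^ j / (ζ - z) ^ (j + 1))

/-- The Hilbert transform for `L`-analytic maps: `hilbT γ g n ξ` is `(Hg)₋₍ₙ₊₁₎(ξ)`. -/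
def hilbT (γ : ℝ → ℂ) (g : ℕ → ℂ → ℂ) (n : ℕ) (ξ : ℂ) : ℂ :=
  (1 / (Real.pi : ℂ)) * cInt γ (fun ζ => g n ζ / (ζ - ξ)) +
    (1 / (Real.pi : ℂ)) *
      (cInt γ (fun ζ =>
          (∑' j : ℕ, g (n + 1 + j) ζ * ((starRingEnd ℂ) (ζ - ξ) / (ζ - ξ)) ^ (j + 1)) / (ζ - ξ)) -
        cIntConj γ fun ζ =>
          (∑' j : ℕ, g (n + 1 + j) ζ * ((starRingEnd ℂ) (ζ - ξ) / (ζ - ξ)) ^ (j + 1)) /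
            (starRingEnd ℂ) (ζ - ξ))

/-- The range condition `(I + iH)g = 0` on `Γ`. -/
def HilbertVanish (γ : ℝ → ℂ) (Γ : Set ℂ) (g : ℕ → ℂ → ℂ) : Prop :=
  ∀ n, ∀ ξ ∈ Γ, g n ξ + Complex.I * hilbT γ g n ξ = 0

/-- Distance `τ₊(x,θ)` from `x` to the boundary in the direction `θ`. -/
def tauP (Ω : Set ℂ) (x θ : ℂ) : ℝ := sSup {t : ℝ | 0 ≤ t ∧ x + t • θ ∈ closure Ω}

/-- Distance `τ₋(x,θ)` from `x` to the boundary in the direction `−θ`. -/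
def tauM (Ω : Set ℂ) (x θ : ℂ) : ℝ := sSup {t : ℝ | 0 ≤ t ∧ x - t • θ ∈ closure Ω}

/-- The divergence beam transform `Da(x,θ) = ∫₀^{τ(x,θ)} a(x+tθ) dt`. -/
def Dbeam (Ω : Set ℂ) (a : ℂ → ℝ) (x θ : ℂ) : ℝ :=
  ∫ t in (0:ℝ)..(tauP Ω x θ + tauM Ω x θ), a (x + t • θ)

/-- `g ∈ DF`: `g` is (non-attenuated) Doppler data of the vector field `F`. -/
def IsDopplerData (Ω : Set ℂ) (F : ℂ → ℂ) (g : ℂ → ℂ → ℝ) : Prop :=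
  ∀ x ∈ closure Ω, ∀ θ ∈ sphere (0:ℂ) 1,
    g (x + tauP Ω x θ • θ) θ - g (x - tauM Ω x θ • θ) θ =
      ∫ t in (-(tauM Ω x θ))..(tauP Ω x θ), dotJ θ (F (x + t • θ))

/-- `g ∈ D_aF`: `g` is attenuated Doppler data of `F` with attenuation `a`. -/
def IsAttenDopplerData (Ω : Set ℂ) (a : ℂ → ℝ) (F : ℂ → ℂ) (g : ℂ → ℂ → ℝ) : Prop :=
  ∀ x ∈ closure Ω, ∀ θ ∈ sphere (0:ℂ) 1,
    g (x + tauP Ω x θ • θ) θ -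
        Real.exp (-Dbeam Ω a (x - tauM Ω x θ • θ) θ) * g (x - tauM Ω x θ • θ) θ =
      ∫ t in (-(tauM Ω x θ))..(tauP Ω x θ),
        dotJ θ (F (x + t • θ)) * Real.exp (-Dbeam Ω a (x + t • θ) θ)

/-- `g ∈ R_af`: `g` is attenuated X-ray data of `f` with attenuation `a`. -/
def IsAttenXrayData (Ω : Set ℂ) (a f : ℂ → ℝ) (g : ℂ → ℂ → ℝ) : Prop :=
  ∀ x ∈ closure Ω, ∀ θ ∈ sphere (0:ℂ) 1,
    g (x + tauP Ω x θ • θ) θ -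
        Real.exp (-Dbeam Ω a (x - tauM Ω x θ • θ) θ) * g (x - tauM Ω x θ • θ) θ =
      ∫ t in (-(tauM Ω x θ))..(tauP Ω x θ),
        f (x + t • θ) * Real.exp (-Dbeam Ω a (x + t • θ) θ)

/-- The direction `θ = (cos φ, sin φ)` as a point of the unit circle in `ℂ`. -/
def circleDir (φ : ℝ) : ℂ := Complex.exp ((φ : ℂ) * Complex.I)

/-- The `n`-th Fourier mode (in the angular variable) of a function on `S¹`. -/
def fModeC (G : ℂ → ℂ) (n : ℤ) : ℂ :=
  (1 / (2 * Real.pi)) *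
    ∫ φ in (0:ℝ)..(2 * Real.pi), G (circleDir φ) * Complex.exp (-(n : ℂ) * (φ : ℂ) * Complex.I)

/-- The `n`-th angular Fourier mode `gₙ(ζ)` of boundary data `g` on `Γ × S¹`. -/
def fMode (g : ℂ → ℂ → ℝ) (n : ℤ) (ζ : ℂ) : ℂ := fModeC (fun θ => (g ζ θ : ℂ)) n

/-- The sequence `g^{even} = ⟨g₋₂, g₋₄, g₋₆, …⟩`. -/
def gEven (g : ℂ → ℂ → ℝ) : ℕ → ℂ → ℂ := fun n ζ => fMode g (-(2 * ((n : ℤ) + 1))) ζ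

/-- The augmented sequence `g^{2m−1} = ⟨g_{2m−1}, g_{2m−3}, …, g₁, g₋₁, g₋₃, …⟩`. -/
def gOddAug (g : ℂ → ℂ → ℝ) (m : ℕ) : ℕ → ℂ → ℂ := fun n ζ =>
  if (n : ℤ) < (m : ℤ) then fMode g (2 * ((m : ℤ) - (n : ℤ)) - 1) ζ
  else fMode g (-(2 * ((n : ℤ) - (m : ℤ)) + 1)) ζ

/-- `g ∈ C^α(Γ; C^{p,α}(S¹))` for boundary data `g` on `Γ × S¹`. -/
def MemCalphaGammaCpalphaS1 (α : ℝ) (p : ℕ) (Γ : Set ℂ) (g : ℂ → ℂ → ℝ) : Prop :=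
  (∀ ζ ∈ Γ, ContDiff ℝ p fun φ : ℝ => g ζ (circleDir φ)) ∧
  (∃ C : ℝ, ∀ ζ ∈ Γ, ∀ i ≤ p, ∀ φ ψ : ℝ,
      |iteratedDeriv i (fun s : ℝ => g ζ (circleDir s)) φ -
        iteratedDeriv i (fun s : ℝ => g ζ (circleDir s)) ψ| ≤ C * |φ - ψ| ^ α) ∧
  ∃ C : ℝ, ∀ ζ ∈ Γ, ∀ η ∈ Γ, ∀ i ≤ p, ∀ φ : ℝ,
    |iteratedDeriv i (fun s : ℝ => g ζ (circleDir s)) φ -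
      iteratedDeriv i (fun s : ℝ => g η (circleDir s)) φ| ≤ C * dist ζ η ^ α

/-- `g ∈ C⁰(Γ; C^{p,α}(S¹))` for boundary data `g` on `Γ × S¹`. -/
def MemC0GammaCpalphaS1 (α : ℝ) (p : ℕ) (Γ : Set ℂ) (g : ℂ → ℂ → ℝ) : Prop :=
  (∀ ζ ∈ Γ, ContDiff ℝ p fun φ : ℝ => g ζ (circleDir φ)) ∧
  (∃ C : ℝ, ∀ ζ ∈ Γ, ∀ φ ψ : ℝ,
      |iteratedDeriv p (fun s : ℝ => g ζ (circleDir s)) φ -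
        iteratedDeriv p (fun s : ℝ => g ζ (circleDir s)) ψ| ≤ C * |φ - ψ| ^ α) ∧
  ∀ ζ₀ ∈ Γ, ∀ ε > 0, ∃ δ > 0, ∀ ζ ∈ Γ, dist ζ ζ₀ < δ →
    ∀ θ ∈ sphere (0:ℂ) 1, |g ζ θ - g ζ₀ θ| < ε

/-- `f ∈ C^{p,α}`: `p` times continuously differentiable with globally `α`-Hölder
`p`-th derivative. -/
def MemCpalpha {X E : Type*} [NormedAddCommGroup X] [NormedSpace ℝ X]
    [NormedAddCommGroup E] [NormedSpace ℝ E] (p : ℕ) (α : ℝ) (f : X → E) : Prop :=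
  ContDiff ℝ p f ∧
  ∃ C : ℝ, ∀ x y : X, ‖iteratedFDeriv ℝ p f x - iteratedFDeriv ℝ p f y‖ ≤ C * dist x y ^ α

/-- `f ∈ C₀^{p,α}(Ω̄)`: a `C^{p,α}` function supported in `Ω̄`. -/
def MemC0palpha {E : Type*} [NormedAddCommGroup E] [NormedSpace ℝ E]
    (p : ℕ) (α : ℝ) (Ω : Set ℂ) (f : ℂ → E) : Prop :=
  MemCpalpha p α f ∧ tsupport f ⊆ closure Ω

/-- The Radon transform `Ra(s,θ) = ∫_ℝ a(sθ⊥ + tθ) dt`, with `θ⊥ = iθ`. -/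
def radonT (a : ℂ → ℝ) (s : ℝ) (θ : ℂ) : ℝ := ∫ t : ℝ, a (s • (Complex.I * θ) + t • θ)

/-- The classical Hilbert transform (principal value) on the line. -/
def pvHilbert (u : ℝ → ℝ) (s : ℝ) : ℝ :=
  limUnder (𝓝[>] (0:ℝ)) fun ε => (1 / Real.pi) * ∫ t in {t : ℝ | ε ≤ |s - t|}, u t / (s - t)

/-- The integrating factor `h(z,θ) = Da(z,θ) − (1/2)(I − iH)Ra(z·θ⊥, θ)`. -/
def hFun (Ω : Set ℂ) (a : ℂ → ℝ) (z θ : ℂ) : ℂ :=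
  (Dbeam Ω a z θ : ℂ) -
    (1 / 2) * ((radonT a (dotJ (Complex.I * θ) z) θ : ℂ) -
      Complex.I * (pvHilbert (fun s => radonT a s θ) (dotJ (Complex.I * θ) z) : ℂ))

/-- `α_k`, the `k`-th angular Fourier mode of `e^{−h}`. -/
def alphaMode (Ω : Set ℂ) (a : ℂ → ℝ) (k : ℕ) (z : ℂ) : ℂ :=
  fModeC (fun θ => Complex.exp (-hFun Ω a z θ)) (k : ℤ)

/-- `β_k`, the `k`-th angular Fourier mode of `e^{h}`. -/
def betaMode (Ω : Set ℂ) (a : ℂ → ℝ) (k : ℕ) (z : ℂ) : ℂ :=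
  fModeC (fun θ => Complex.exp (hFun Ω a z θ)) (k : ℤ)

/-- `g_h = ⟨γ₋₁, γ₋₂, …⟩`, the negative angular Fourier modes of `e^{−h}g` on `Γ`:
`gH Ω a g n ζ = γ₋₍ₙ₊₁₎(ζ)`. -/
def gH (Ω : Set ℂ) (a : ℂ → ℝ) (g : ℂ → ℂ → ℝ) : ℕ → ℂ → ℂ := fun n ζ =>
  fModeC (fun θ => Complex.exp (-hFun Ω a ζ θ) * (g ζ θ : ℂ)) (-((n : ℤ) + 1))

/-- `g_h^{even} = ⟨γ₋₂, γ₋₄, …⟩`. -/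
def gHeven (Ω : Set ℂ) (a : ℂ → ℝ) (g : ℂ → ℂ → ℝ) : ℕ → ℂ → ℂ :=
  fun n => gH Ω a g (2 * n + 1)

/-- `g_h^{odd} = ⟨γ₋₁, γ₋₃, …⟩`. -/
def gHodd (Ω : Set ℂ) (a : ℂ → ℝ) (g : ℂ → ℂ → ℝ) : ℕ → ℂ → ℂ :=
  fun n => gH Ω a g (2 * n)

/-- The function `u₋₁ = Σ_j β_j (B g_h)_{−1−j}` appearing in the range characterization
of the attenuated Doppler transform. -/
def uMinusOne (Ω : Set ℂ) (a : ℂ → ℝ) (γ : ℝ → ℂ) (g : ℂ → ℂ → ℝ) (z : ℂ) : ℂ :=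
  ∑' j : ℕ, betaMode Ω a j z * bukhCauchy γ (gH Ω a g) j z

/-- `g` is the trace on `Γ × S¹` of a solution `w` of the transport equation
`θ·∇w + aw = rhs` in `Ω × S¹`. -/
def IsTraceOfTransportSolution (Ω : Set ℂ) (a : ℂ → ℝ) (rhs : ℂ → ℂ → ℝ)
    (g : ℂ → ℂ → ℝ) : Prop :=
  ∃ w : ℂ → ℂ → ℝ,
    (∀ θ ∈ sphere (0:ℂ) 1,
      ContinuousOn (fun x => w x θ) (closure Ω) ∧ DifferentiableOn ℝ (fun x => w x θ) Ω) ∧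
    (∀ θ ∈ sphere (0:ℂ) 1, ∀ x ∈ Ω,
      fderiv ℝ (fun y => w y θ) x θ + a x * w x θ = rhs x θ) ∧
    ∀ ζ ∈ frontier Ω, ∀ θ ∈ sphere (0:ℂ) 1, w ζ θ = g ζ θ

/-- `u ∈ C^{1,α}(Ω; l∞)` (componentwise, with Hölder bounds for the derivative,
uniform in the component, on compact subsets). -/
def SeqC1alphaLinf (α : ℝ) (Ω : Set ℂ) (u : ℕ → ℂ → ℂ) : Prop :=
  (∀ n, ContDiffOn ℝ 1 (u n) Ω) ∧
  ∀ K : Set ℂ, IsCompact K → K ⊆ Ω → ∃ C : ℝ, ∀ n, ∀ z ∈ K, ∀ w ∈ K,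
    ‖fderivWithin ℝ (u n) Ω z - fderivWithin ℝ (u n) Ω w‖ ≤ C * dist z w ^ α

/-- `u ∈ C^{p,α}(Ω; l₁)`. -/
def SeqCpalphaL1 (p : ℕ) (α : ℝ) (Ω : Set ℂ) (u : ℕ → ℂ → ℂ) : Prop :=
  (∀ n, ContDiffOn ℝ p (u n) Ω) ∧
  (∀ i ≤ p, ∀ z ∈ Ω, Summable fun n => ‖iteratedFDerivWithin ℝ i (u n) Ω z‖) ∧
  ∀ K : Set ℂ, IsCompact K → K ⊆ Ω → ∃ C : ℝ, ∀ z ∈ K, ∀ w ∈ K,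
    (∑' n, ‖iteratedFDerivWithin ℝ p (u n) Ω z - iteratedFDerivWithin ℝ p (u n) Ω w‖) ≤
      C * dist z w ^ α

/-- `u ∈ C²(Ω; l∞)`: componentwise `C²` with second derivatives bounded uniformly in the
component on compact subsets of `Ω`. -/
def SeqC2Linf (Ω : Set ℂ) (u : ℕ → ℂ → ℂ) : Prop :=
  (∀ n, ContDiffOn ℝ 2 (u n) Ω) ∧
  ∀ K : Set ℂ, IsCompact K → K ⊆ Ω → ∃ C : ℝ, ∀ n, ∀ z ∈ K,
    ‖iteratedFDerivWithin ℝ 2 (u n) Ω z‖ ≤ C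

/-- `u ∈ C¹(Ω; l₁)`. -/
def SeqC1L1 (Ω : Set ℂ) (u : ℕ → ℂ → ℂ) : Prop :=
  (∀ n, ContDiffOn ℝ 1 (u n) Ω) ∧
  (∀ z ∈ Ω, Summable fun n => ‖u n z‖) ∧
  ∀ z ∈ Ω, Summable fun n => ‖fderiv ℝ (u n) z‖


/-!
Put `c_j = u_{2j+1} - conj u_{-(2j+1)}`. The `L`-analyticity of the augmented sequences gives
`∂ c_j + ∂̄ c_{j+1} = 0` in `Ω` (conjugating the equations of the negative half), and the trace
condition gives `c_j = 0` on `Γ`. Green's formula applied to `c_j p` and `c_{j+1} p` with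
`p = z̄^a z^{b+1}` yields `(b+1) ∫_Ω c_j z̄^a z^b = -a ∫_Ω c_{j+1} z̄^{a-1} z^{b+1}`, so by induction
on `a` all moments `∫_Ω c_j z̄^a z^b` vanish. Polynomials in `z, z̄` are dense in `C(Ω̄)`
(Stone–Weierstrass), hence `∫_Ω |c_j|² = 0` and `c_j = 0`.

Green's formula is needed for fields that are only `C¹` inside `Ω`, continuous up to `Γ` and zero
there. On the shrunken copies `z₀ + s⁻¹ (Ω - z₀)`, `s ↓ 1`, each partial derivative integrates
along parallel chords to differences of boundary values, and these tend to `0`.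
-/

open ComplexConjugate AffineMap

lemma integrableOn_of_continuousOn_closure {E : Type*} [NormedAddCommGroup E] {f : ℂ → E}
    {s : Set ℂ} (hs : Bornology.IsBounded s)
    (hf : ContinuousOn f (closure s)) : IntegrableOn f s :=
  (hf.integrableOn_compact hs.isCompact_closure).mono_set subset_closure

section Homothety

variable {E F : Type*} [NormedAddCommGroup E] [NormedSpace ℝ E] [NormedAddCommGroup F]
  {Ω : Set E} {z₀ : E}

lemma closure_preimage_homothety_subset (hΩc : Convex ℝ Ω) (hΩo : IsOpen Ω) (hz₀ : z₀ ∈ Ω)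
    {s : ℝ} (hs : 1 < s) : closure (homothety z₀ s ⁻¹' Ω) ⊆ Ω := by
  intro w hw
  have hw' : homothety z₀ s w ∈ closure Ω :=
    (homothety_continuous z₀ s).closure_preimage_subset Ω hw
  have hseg : w ∈ openSegment ℝ z₀ (homothety z₀ s w) := by
    rw [openSegment_eq_image_lineMap]
    refine ⟨s⁻¹, ⟨by positivity, inv_lt_one_of_one_lt₀ hs⟩, ?_⟩
    rw [← homothety_eq_lineMap, ← homothety_mul_apply z₀ s⁻¹ s w, inv_mul_cancel₀ (by positivity),
      homothety_one, id_apply]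
  rw [← hΩo.interior_eq] at hz₀ ⊢
  exact hΩc.openSegment_interior_closure_subset_interior hz₀ hw' hseg

lemma tendsto_setIntegral_preimage_homothety [NormedSpace ℝ F] [MeasurableSpace E] [BorelSpace E]
    {μ : Measure E} {D : E → F} (hΩc : Convex ℝ Ω) (hΩo : IsOpen Ω) (hz₀ : z₀ ∈ Ω)
    (hD : IntegrableOn D Ω μ) :
    Tendsto (fun s => ∫ z in homothety z₀ s ⁻¹' Ω, D z ∂μ) (𝓝[>] (1 : ℝ))
      (𝓝 (∫ z in Ω, D z ∂μ)) := by
  have hsub : ∀ s : ℝ, 1 < s → homothety z₀ s ⁻¹' Ω ⊆ Ω := fun s hs =>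
    subset_closure.trans (closure_preimage_homothety_subset hΩc hΩo hz₀ hs)
  have hmeas : ∀ s : ℝ, MeasurableSet (homothety z₀ s ⁻¹' Ω) := fun s =>
    hΩo.measurableSet.preimage (homothety_continuous z₀ s).measurable
  simp_rw [← integral_indicator (hmeas _), ← integral_indicator hΩo.measurableSet]
  refine tendsto_integral_filter_of_dominated_convergence (Ω.indicator fun z => ‖D z‖) ?_ ?_
    ((integrable_indicator_iff hΩo.measurableSet).2 hD.norm) (Eventually.of_forall fun z => ?_)
  · filter_upwards [self_mem_nhdsWithin] with s hs
    exact (aestronglyMeasurable_indicator_iff (hmeas s)).2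
      (hD.mono_set (hsub s hs)).aestronglyMeasurable
  · filter_upwards [self_mem_nhdsWithin] with s hs
    refine Eventually.of_forall fun z => ?_
    rw [norm_indicator_eq_indicator_norm]
    exact indicator_le_indicator_of_subset (hsub s hs) (fun _ => norm_nonneg _) z
  by_cases hz : z ∈ Ω
  · have hzs : ∀ᶠ s in 𝓝[>] (1 : ℝ), z ∈ homothety z₀ s ⁻¹' Ω :=
      nhdsWithin_le_nhds <|
        eventually_homothety_mem_of_mem_interior ℝ z₀ (s := Ω) (by rwa [hΩo.interior_eq])
    exact tendsto_const_nhds.congr' (hzs.mono fun s hs => by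
      simp only [indicator_of_mem hs, indicator_of_mem hz])
  · exact tendsto_const_nhds.congr' (eventually_nhdsWithin_of_forall fun s hs => by
      simp only [indicator_of_notMem hz, indicator_of_notMem fun h => hz (hsub s hs h)])

lemma eventually_norm_le_of_mem_frontier_preimage_homothety [ProperSpace E] {V : E → F}
    (hΩc : Convex ℝ Ω) (hΩo : IsOpen Ω) (hΩb : Bornology.IsBounded Ω) (hz₀ : z₀ ∈ Ω)
    (hV : ContinuousOn V (closure Ω)) (hV0 : ∀ ζ ∈ frontier Ω, V ζ = 0) {ε : ℝ} (hε : 0 < ε) :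
    ∀ᶠ s in 𝓝[>] (1 : ℝ), ∀ w ∈ frontier (homothety z₀ s ⁻¹' Ω), ‖V w‖ ≤ ε := by
  obtain ⟨δ, hδ, hVδ⟩ := Metric.uniformContinuousOn_iff.1
    (hΩb.isCompact_closure.uniformContinuousOn_of_continuous hV) ε hε
  obtain ⟨C, hC⟩ := Metric.isBounded_iff.1 hΩb
  have hnear : ∀ᶠ s in 𝓝 (1 : ℝ), ‖1 - s‖ * C < δ := by
    have hcont : Continuous fun s : ℝ => ‖1 - s‖ * C := by fun_prop
    exact (hcont.tendsto' 1 0 (by simp)).eventually (gt_mem_nhds hδ)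
  filter_upwards [self_mem_nhdsWithin, nhdsWithin_le_nhds hnear] with s hs hsδ w hw
  have hwΩ : w ∈ Ω := closure_preimage_homothety_subset hΩc hΩo hz₀ hs (frontier_subset_closure hw)
  have hζ : homothety z₀ s w ∈ frontier Ω :=
    (homothety_continuous z₀ s).frontier_preimage_subset Ω hw
  have hdist : dist w (homothety z₀ s w) < δ := by
    rw [dist_self_homothety]
    exact (mul_le_mul_of_nonneg_left (hC hz₀ hwΩ) (norm_nonneg _)).trans_lt hsδ
  have := hVδ w (subset_closure hwΩ) _ (frontier_subset_closure hζ) hdist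
  rw [dist_eq_norm, hV0 _ hζ, sub_zero] at this
  exact this.le

end Homothety

lemma eq_Ioo_csInf_csSup {s : Set ℝ} (ho : IsOpen s) (hc : Convex ℝ s)
    (hb : Bornology.IsBounded s) (hne : s.Nonempty) : s = Ioo (sInf s) (sSup s) := by
  refine Subset.antisymm (fun x hx => ⟨?_, ?_⟩)
    ((show IsConnected s from ⟨hne, hc.isPreconnected⟩).Ioo_csInf_csSup_subset hb.bddBelow
      hb.bddAbove)
  · obtain ⟨y, hys, hyx⟩ := Filter.nonempty_of_mem
      (inter_mem (mem_nhdsWithin_of_mem_nhds (ho.mem_nhds hx)) (self_mem_nhdsWithin (s := Iio x)))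
    exact (csInf_le hb.bddBelow hys).trans_lt hyx
  · obtain ⟨y, hys, hxy⟩ := Filter.nonempty_of_mem
      (inter_mem (mem_nhdsWithin_of_mem_nhds (ho.mem_nhds hx)) (self_mem_nhdsWithin (s := Ioi x)))
    exact hxy.trans_le (le_csSup hb.bddAbove hys)


section Flux

variable {U : Set ℂ} {V : ℂ → ℂ} {M R : ℝ}

lemma exists_slice_eq_Ioo (hUo : IsOpen U) (hUc : Convex ℝ U) (hUb : Bornology.IsBounded U)
    (y : ℝ) (hne : {x : ℝ | (x : ℂ) + y * I ∈ U}.Nonempty) :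
    ∃ a b, a < b ∧ {x : ℝ | (x : ℂ) + y * I ∈ U} = Ioo a b ∧
      (a : ℂ) + y * I ∈ frontier U ∧ (b : ℂ) + y * I ∈ frontier U := by
  have hL : Continuous fun x : ℝ => (x : ℂ) + y * I := by fun_prop
  have hsc : Convex ℝ {x : ℝ | (x : ℂ) + y * I ∈ U} := fun x₁ h₁ x₂ h₂ a b ha hb hab => by
    have := hUc h₁ h₂ ha hb hab
    show ((a • x₁ + b • x₂ : ℝ) : ℂ) + y * I ∈ U
    convert this using 1
    have hab' : (a : ℂ) + b = 1 := by exact_mod_cast hab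
    simp only [Complex.real_smul, smul_eq_mul]
    push_cast
    linear_combination (-(y : ℂ) * I) * hab'
  have hsb : Bornology.IsBounded {x : ℝ | (x : ℂ) + y * I ∈ U} :=
    (Complex.reCLM.lipschitz.isBounded_image hUb).subset fun x hx => ⟨_, hx, by simp⟩
  obtain ⟨a, b, hs⟩ : ∃ a b, {x : ℝ | (x : ℂ) + y * I ∈ U} = Ioo a b :=
    ⟨_, _, eq_Ioo_csInf_csSup (hUo.preimage hL) hsc hsb hne⟩
  obtain ⟨x, hx⟩ := hne
  rw [hs] at hx
  have hab := hx.1.trans hx.2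
  have hfr : ∀ c ∈ Icc a b, c ∉ Ioo a b → (c : ℂ) + y * I ∈ frontier U := fun c hc hcs => by
    rw [← hs] at hcs
    rw [← closure_Ioo hab.ne, ← hs] at hc
    rw [hUo.frontier_eq]
    exact ⟨hL.closure_preimage_subset U hc, hcs⟩
  exact ⟨a, b, hab, hs, hfr a (left_mem_Icc.2 hab.le) (by simp),
    hfr b (right_mem_Icc.2 hab.le) (by simp)⟩

lemma norm_integral_slice_fderiv_one_le (hUo : IsOpen U) (hUc : Convex ℝ U)
    (hUR : U ⊆ closedBall 0 R) (hV : ∀ z ∈ closure U, DifferentiableAt ℝ V z)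
    (hV' : ContinuousOn (fun z => fderiv ℝ V z 1) (closure U)) (hM0 : 0 ≤ M)
    (hM : ∀ z ∈ frontier U, ‖V z‖ ≤ M) (y : ℝ) :
    ‖∫ x : ℝ, U.indicator (fun z => fderiv ℝ V z 1) (x + y * I)‖ ≤
      (Icc (-R) R).indicator (fun _ => 2 * M) y := by
  have hL : Continuous fun x : ℝ => (x : ℂ) + y * I := by fun_prop
  have hmeas : MeasurableSet {x : ℝ | (x : ℂ) + y * I ∈ U} := (hUo.preimage hL).measurableSet
  have hind : ∀ x : ℝ, U.indicator (fun z => fderiv ℝ V z 1) (x + y * I) =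
      {x : ℝ | (x : ℂ) + y * I ∈ U}.indicator (fun x => fderiv ℝ V (x + y * I) 1) x :=
    fun x => (indicator_comp_right (g := fun z => fderiv ℝ V z 1) _).symm
  rw [integral_congr_ae (Eventually.of_forall hind), integral_indicator hmeas]
  rcases {x : ℝ | (x : ℂ) + y * I ∈ U}.eq_empty_or_nonempty with hempty | hne
  · rw [hempty, Measure.restrict_empty, integral_zero_measure, norm_zero]
    exact indicator_nonneg (fun _ _ => by positivity) y
  obtain ⟨a, b, hab, hs, ha, hb⟩ :=
    exists_slice_eq_Ioo hUo hUc (isBounded_closedBall.subset hUR) y hne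
  have hy : y ∈ Icc (-R) R := by
    have hmid : (a + b) / 2 ∈ {x : ℝ | (x : ℂ) + y * I ∈ U} := by
      rw [hs]; constructor <;> linarith
    have := (Complex.abs_im_le_norm _).trans (mem_closedBall_zero_iff.1 (hUR hmid))
    simpa [abs_le] using this
  have hIcc : ∀ x ∈ uIcc a b, (x : ℂ) + y * I ∈ closure U := fun x hx => by
    rw [uIcc_of_le hab.le, ← closure_Ioo hab.ne, ← hs] at hx
    exact hL.closure_preimage_subset U hx
  have hftc : ∫ x in a..b, fderiv ℝ V (x + y * I) 1 = V (b + y * I) - V (a + y * I) :=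
    intervalIntegral.integral_eq_sub_of_hasDerivAt (f := fun x : ℝ => V (x + y * I))
      (fun x hx => by
        have := (hV _ (hIcc x hx)).hasFDerivAt.comp_hasDerivAt x
          (((hasDerivAt_id x).ofReal_comp).add_const (y * I))
        simpa [Function.comp_def] using this)
      (hV'.comp hL.continuousOn hIcc).intervalIntegrable
  rw [hs, ← integral_Ioc_eq_integral_Ioo, ← intervalIntegral.integral_of_le hab.le, hftc,
    indicator_of_mem hy]
  calc ‖V (b + y * I) - V (a + y * I)‖ ≤ ‖V (b + y * I)‖ + ‖V (a + y * I)‖ := norm_sub_le _ _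
    _ ≤ 2 * M := by linarith [hM _ ha, hM _ hb]

lemma norm_setIntegral_fderiv_one_le (hUo : IsOpen U) (hUc : Convex ℝ U)
    (hUR : U ⊆ closedBall 0 R) (hV : ∀ z ∈ closure U, DifferentiableAt ℝ V z)
    (hV' : ContinuousOn (fun z => fderiv ℝ V z 1) (closure U)) (hM0 : 0 ≤ M) (hR0 : 0 ≤ R)
    (hM : ∀ z ∈ frontier U, ‖V z‖ ≤ M) :
    ‖∫ z in U, fderiv ℝ V z 1‖ ≤ 2 * M * (2 * R) := by
  set g := U.indicator fun z => fderiv ℝ V z 1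
  have hg : Integrable g := (integrable_indicator_iff hUo.measurableSet).2
    (integrableOn_of_continuousOn_closure (isBounded_closedBall.subset hUR) hV')
  have hmp := Complex.volume_preserving_equiv_real_prod.symm
  have hg' : Integrable (fun p : ℝ × ℝ => g (p.1 + p.2 * I)) (volume.prod volume) := by
    rw [← Measure.volume_eq_prod]
    simpa [Function.comp_def, Complex.mk_eq_add_mul_I] using hmp.integrable_comp_of_integrable hg
  calc ‖∫ z in U, fderiv ℝ V z 1‖ = ‖∫ y : ℝ, ∫ x : ℝ, g (x + y * I)‖ := by
        rw [← integral_indicator hUo.measurableSet, ← hmp.integral_comp', Measure.volume_eq_prod,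
          ← integral_prod_symm _ hg']
        simp [Complex.mk_eq_add_mul_I, g]
    _ ≤ ∫ y : ℝ, ‖∫ x : ℝ, g (x + y * I)‖ := norm_integral_le_integral_norm _
    _ ≤ ∫ y : ℝ, (Icc (-R) R).indicator (fun _ => 2 * M) y :=
        integral_mono_of_nonneg (Eventually.of_forall fun _ => norm_nonneg _)
          ((integrable_indicator_iff measurableSet_Icc).2
            (integrableOn_const measure_Icc_lt_top.ne))
          (Eventually.of_forall (norm_integral_slice_fderiv_one_le hUo hUc hUR hV hV' hM0 hM))
    _ = 2 * M * (2 * R) := by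
        rw [integral_indicator_const _ measurableSet_Icc, Real.volume_real_Icc_of_le (by linarith),
          smul_eq_mul]
        ring

lemma norm_setIntegral_fderiv_le (hUo : IsOpen U) (hUc : Convex ℝ U)
    (hUR : U ⊆ closedBall 0 R) (hV : ∀ z ∈ closure U, DifferentiableAt ℝ V z) (v : Circle)
    (hV' : ContinuousOn (fun z => fderiv ℝ V z v) (closure U)) (hM0 : 0 ≤ M) (hR0 : 0 ≤ R)
    (hM : ∀ z ∈ frontier U, ‖V z‖ ≤ M) :
    ‖∫ z in U, fderiv ℝ V z v‖ ≤ 2 * M * (2 * R) := by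
  set ρ := rotation v
  have hcl : ∀ w ∈ closure (ρ ⁻¹' U), ρ w ∈ closure U := fun w hw =>
    (ρ.toHomeomorph.preimage_closure U).ge hw
  have hfr : ∀ w ∈ frontier (ρ ⁻¹' U), ρ w ∈ frontier U := fun w hw =>
    (ρ.toHomeomorph.preimage_frontier U).ge hw
  have hderiv : ∀ w ∈ closure (ρ ⁻¹' U), HasFDerivAt (fun w => V (ρ w))
      ((fderiv ℝ V (ρ w)).comp (ρ : ℂ →L[ℝ] ℂ)) w := fun w hw =>
    (hV _ (hcl w hw)).hasFDerivAt.comp w ρ.toContinuousLinearEquiv.hasFDerivAt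
  have hderiv_one : ∀ w ∈ closure (ρ ⁻¹' U),
      fderiv ℝ (fun w => V (ρ w)) w 1 = fderiv ℝ V (ρ w) v := fun w hw => by
    rw [(hderiv w hw).fderiv, ContinuousLinearMap.comp_apply]
    simp [ρ]
  have key := norm_setIntegral_fderiv_one_le (U := ρ ⁻¹' U) (V := fun w => V (ρ w))
    (hUo.preimage ρ.continuous) (hUc.linear_preimage ρ.toLinearEquiv.toLinearMap)
    (fun w hw => by simpa using hUR hw) (fun w hw => (hderiv w hw).differentiableAt)
    ((hV'.comp ρ.continuous.continuousOn hcl).congr hderiv_one) hM0 hR0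
    (fun w hw => hM _ (hfr w hw))
  rw [setIntegral_congr_fun (hUo.preimage ρ.continuous).measurableSet
    fun w hw => hderiv_one w (subset_closure hw)] at key
  rwa [← ρ.measurePreserving.setIntegral_preimage_emb (by exact ρ.toHomeomorph.measurableEmbedding)
    (fun z => fderiv ℝ V z v) U]

end Flux

lemma norm_setIntegral_le_of_fderiv_one_add_fderiv_I_eq {Ω U : Set ℂ} {V₁ V₂ D : ℂ → ℂ} {M R : ℝ}
    (hΩo : IsOpen Ω) (hUo : IsOpen U) (hUc : Convex ℝ U) (hUR : U ⊆ closedBall 0 R)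
    (hUΩ : closure U ⊆ Ω) (hV₁ : ContDiffOn ℝ 1 V₁ Ω) (hV₂ : ContDiffOn ℝ 1 V₂ Ω)
    (hdiv : ∀ z ∈ U, fderiv ℝ V₁ z 1 + fderiv ℝ V₂ z I = D z) (hM0 : 0 ≤ M) (hR0 : 0 ≤ R)
    (hV₁M : ∀ z ∈ frontier U, ‖V₁ z‖ ≤ M) (hV₂M : ∀ z ∈ frontier U, ‖V₂ z‖ ≤ M) :
    ‖∫ z in U, D z‖ ≤ 8 * M * R := by
  have hdiff : ∀ V : ℂ → ℂ, ContDiffOn ℝ 1 V Ω → ∀ z ∈ closure U, DifferentiableAt ℝ V z :=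
    fun V hV z hz => (hV.differentiableOn one_ne_zero).differentiableAt (hΩo.mem_nhds (hUΩ hz))
  have hcont : ∀ V : ℂ → ℂ, ContDiffOn ℝ 1 V Ω → ∀ v : ℂ,
      ContinuousOn (fun z => fderiv ℝ V z v) (closure U) := fun V hV v =>
    ((hV.continuousOn_fderiv_of_isOpen hΩo le_rfl).clm_apply continuousOn_const).mono hUΩ
  have hUb : Bornology.IsBounded U := isBounded_closedBall.subset hUR
  have h1 : ‖∫ z in U, fderiv ℝ V₁ z 1‖ ≤ 2 * M * (2 * R) := by
    simpa using norm_setIntegral_fderiv_le hUo hUc hUR (hdiff V₁ hV₁) 1 (hcont V₁ hV₁ 1) hM0 hR0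
      hV₁M
  have hI : ‖∫ z in U, fderiv ℝ V₂ z I‖ ≤ 2 * M * (2 * R) :=
    norm_setIntegral_fderiv_le hUo hUc hUR (hdiff V₂ hV₂) ⟨I, by simp [Submonoid.unitSphere]⟩
      (hcont V₂ hV₂ I) hM0 hR0 hV₂M
  rw [← setIntegral_congr_fun hUo.measurableSet hdiv,
    integral_add (integrableOn_of_continuousOn_closure hUb (hcont V₁ hV₁ 1))
      (integrableOn_of_continuousOn_closure hUb (hcont V₂ hV₂ I))]
  linarith [norm_add_le (∫ z in U, fderiv ℝ V₁ z 1) (∫ z in U, fderiv ℝ V₂ z I)]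

theorem setIntegral_eq_zero_of_fderiv_one_add_fderiv_I_eq {Ω : Set ℂ} {V₁ V₂ D : ℂ → ℂ}
    (hΩo : IsOpen Ω) (hΩb : Bornology.IsBounded Ω) (hΩc : Convex ℝ Ω)
    (hV₁ : ContinuousOn V₁ (closure Ω)) (hV₂ : ContinuousOn V₂ (closure Ω))
    (hV₁' : ContDiffOn ℝ 1 V₁ Ω) (hV₂' : ContDiffOn ℝ 1 V₂ Ω) (hD : ContinuousOn D (closure Ω))
    (hdiv : ∀ z ∈ Ω, fderiv ℝ V₁ z 1 + fderiv ℝ V₂ z I = D z)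
    (hV₁0 : ∀ z ∈ frontier Ω, V₁ z = 0) (hV₂0 : ∀ z ∈ frontier Ω, V₂ z = 0) :
    ∫ z in Ω, D z = 0 := by
  rcases Ω.eq_empty_or_nonempty with rfl | ⟨z₀, hz₀⟩
  · simp
  obtain ⟨R, hR⟩ := hΩb.subset_closedBall 0
  have hR0 : 0 ≤ R := dist_nonneg.trans (hR hz₀)
  refine tendsto_nhds_unique (tendsto_setIntegral_preimage_homothety hΩc hΩo hz₀
    (integrableOn_of_continuousOn_closure hΩb hD)) (Metric.tendsto_nhds.2 fun ε hε => ?_)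
  set η := ε / (8 * R + 1)
  have hη : 0 < η := by positivity
  have hηε : 8 * η * R < ε := by
    rw [show 8 * η * R = 8 * R * ε / (8 * R + 1) by ring, div_lt_iff₀ (by positivity)]
    nlinarith
  filter_upwards [self_mem_nhdsWithin,
    eventually_norm_le_of_mem_frontier_preimage_homothety hΩc hΩo hΩb hz₀ hV₁ hV₁0 hη,
    eventually_norm_le_of_mem_frontier_preimage_homothety hΩc hΩo hΩb hz₀ hV₂ hV₂0 hη]
    with s hs h₁ h₂
  have hUΩ := closure_preimage_homothety_subset hΩc hΩo hz₀ hs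
  rw [dist_zero_right]
  exact (norm_setIntegral_le_of_fderiv_one_add_fderiv_I_eq hΩo
    (hΩo.preimage (homothety_continuous z₀ s)) (hΩc.affine_preimage _)
    ((subset_closure.trans hUΩ).trans hR) hUΩ hV₁' hV₂'
    (fun z hz => hdiv z (hUΩ (subset_closure hz))) hη.le hR0 h₁ h₂).trans_lt hηε

section CauchyRiemann

variable {f g : ℂ → ℂ} {z : ℂ}

lemma fderiv_conj_comp (hf : DifferentiableAt ℝ f z) :
    fderiv ℝ (fun w => conj (f w)) z = conjCLE.toContinuousLinearMap.comp (fderiv ℝ f z) :=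
  (conjCLE.toContinuousLinearMap.hasFDerivAt.comp z hf.hasFDerivAt).fderiv

lemma ddz_conj (hf : DifferentiableAt ℝ f z) : ddz (fun w => conj (f w)) z = conj (dbar f z) := by
  simp only [ddz, dbar, fderiv_conj_comp hf, ContinuousLinearMap.comp_apply,
    ContinuousLinearEquiv.coe_coe, conjCLE_apply, map_div₀, map_add, map_mul, conj_I, map_ofNat]
  ring

lemma dbar_conj (hf : DifferentiableAt ℝ f z) : dbar (fun w => conj (f w)) z = conj (ddz f z) := by
  simp only [ddz, dbar, fderiv_conj_comp hf, ContinuousLinearMap.comp_apply,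
    ContinuousLinearEquiv.coe_coe, conjCLE_apply, map_div₀, map_sub, map_mul, conj_I, map_ofNat]
  ring

lemma ddz_sub (hf : DifferentiableAt ℝ f z) (hg : DifferentiableAt ℝ g z) :
    ddz (f - g) z = ddz f z - ddz g z := by
  simp only [ddz, fderiv_sub hf hg, sub_apply]
  ring

lemma dbar_sub (hf : DifferentiableAt ℝ f z) (hg : DifferentiableAt ℝ g z) :
    dbar (f - g) z = dbar f z - dbar g z := by
  simp only [dbar, fderiv_sub hf hg, sub_apply]
  ring

lemma ddz_mul (hf : DifferentiableAt ℝ f z) (hg : DifferentiableAt ℝ g z) :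
    ddz (f * g) z = ddz f z * g z + f z * ddz g z := by
  simp only [ddz, fderiv_mul hf hg, add_apply, smul_apply, smul_eq_mul]
  ring

lemma dbar_mul (hf : DifferentiableAt ℝ f z) (hg : DifferentiableAt ℝ g z) :
    dbar (f * g) z = dbar f z * g z + f z * dbar g z := by
  simp only [dbar, fderiv_mul hf hg, add_apply, smul_apply, smul_eq_mul]
  ring

lemma fderiv_real_apply_eq_mul_deriv (hf : DifferentiableAt ℂ f z) (v : ℂ) :
    fderiv ℝ f z v = v * deriv f z := by
  rw [hf.fderiv_restrictScalars ℝ]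
  simp

lemma ddz_eq_deriv (hf : DifferentiableAt ℂ f z) : ddz f z = deriv f z := by
  rw [ddz, fderiv_real_apply_eq_mul_deriv hf, fderiv_real_apply_eq_mul_deriv hf]
  linear_combination (-deriv f z / 2) * I_sq

lemma dbar_eq_zero (hf : DifferentiableAt ℂ f z) : dbar f z = 0 := by
  rw [dbar, fderiv_real_apply_eq_mul_deriv hf, fderiv_real_apply_eq_mul_deriv hf]
  linear_combination (deriv f z / 2) * I_sq

lemma continuous_ddz (hf : ContDiff ℝ 1 f) : Continuous (ddz f) := by
  have := hf.continuous_fderiv one_ne_zero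
  unfold ddz
  fun_prop

lemma continuous_dbar (hf : ContDiff ℝ 1 f) : Continuous (dbar f) := by
  have := hf.continuous_fderiv one_ne_zero
  unfold dbar
  fun_prop

end CauchyRiemann

theorem setIntegral_eq_zero_of_ddz_add_dbar_eq {Ω : Set ℂ} {F G D : ℂ → ℂ}
    (hΩo : IsOpen Ω) (hΩb : Bornology.IsBounded Ω) (hΩc : Convex ℝ Ω)
    (hF : ContinuousOn F (closure Ω)) (hG : ContinuousOn G (closure Ω))
    (hF' : ContDiffOn ℝ 1 F Ω) (hG' : ContDiffOn ℝ 1 G Ω) (hD : ContinuousOn D (closure Ω))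
    (hFG : ∀ z ∈ Ω, ddz F z + dbar G z = D z)
    (hF0 : ∀ z ∈ frontier Ω, F z = 0) (hG0 : ∀ z ∈ frontier Ω, G z = 0) :
    ∫ z in Ω, D z = 0 := by
  refine setIntegral_eq_zero_of_fderiv_one_add_fderiv_I_eq (V₁ := fun z => 2⁻¹ * (F z + G z))
    (V₂ := fun z => 2⁻¹ * I * (G z - F z)) hΩo hΩb hΩc (continuousOn_const.mul (hF.add hG))
    (continuousOn_const.mul (hG.sub hF)) (contDiffOn_const.mul (hF'.add hG'))
    (contDiffOn_const.mul (hG'.sub hF')) hD (fun z hz => ?_)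
    (fun z hz => by simp [hF0 z hz, hG0 z hz]) (fun z hz => by simp [hF0 z hz, hG0 z hz])
  have hFz := ((hF'.differentiableOn one_ne_zero).differentiableAt (hΩo.mem_nhds hz)).hasFDerivAt
  have hGz := ((hG'.differentiableOn one_ne_zero).differentiableAt (hΩo.mem_nhds hz)).hasFDerivAt
  have hV₁ : HasFDerivAt (fun z => 2⁻¹ * (F z + G z)) _ z := (hFz.add hGz).const_mul 2⁻¹
  have hV₂ : HasFDerivAt (fun z => 2⁻¹ * I * (G z - F z)) _ z := (hGz.sub hFz).const_mul (2⁻¹ * I)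
  rw [← hFG z hz, hV₁.fderiv, hV₂.fderiv]
  simp only [ddz, dbar, smul_apply, add_apply, sub_apply, smul_eq_mul]
  ring

section Moments

variable {Ω : Set ℂ}

lemma setIntegral_mul_ddz_add_mul_dbar_eq_zero {c₁ c₂ p : ℂ → ℂ}
    (hΩo : IsOpen Ω) (hΩb : Bornology.IsBounded Ω) (hΩc : Convex ℝ Ω)
    (hc₁ : ContinuousOn c₁ (closure Ω)) (hc₂ : ContinuousOn c₂ (closure Ω))
    (hc₁' : ContDiffOn ℝ 1 c₁ Ω) (hc₂' : ContDiffOn ℝ 1 c₂ Ω)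
    (hc : ∀ z ∈ Ω, ddz c₁ z + dbar c₂ z = 0)
    (hc₁0 : ∀ z ∈ frontier Ω, c₁ z = 0) (hc₂0 : ∀ z ∈ frontier Ω, c₂ z = 0)
    (hp : ContDiff ℝ 1 p) :
    ∫ z in Ω, (c₁ z * ddz p z + c₂ z * dbar p z) = 0 := by
  refine setIntegral_eq_zero_of_ddz_add_dbar_eq (F := c₁ * p) (G := c₂ * p) hΩo hΩb hΩc
    (hc₁.mul hp.continuous.continuousOn) (hc₂.mul hp.continuous.continuousOn)
    (hc₁'.mul hp.contDiffOn) (hc₂'.mul hp.contDiffOn)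
    ((hc₁.mul (continuous_ddz hp).continuousOn).add (hc₂.mul (continuous_dbar hp).continuousOn))
    (fun z hz => ?_) (fun z hz => by simp [hc₁0 z hz]) (fun z hz => by simp [hc₂0 z hz])
  have hd : ∀ c : ℂ → ℂ, ContDiffOn ℝ 1 c Ω → DifferentiableAt ℝ c z := fun c hc =>
    (hc.differentiableOn one_ne_zero).differentiableAt (hΩo.mem_nhds hz)
  have hpz := hp.differentiable one_ne_zero z
  rw [ddz_mul (hd c₁ hc₁') hpz, dbar_mul (hd c₂ hc₂') hpz]
  linear_combination p z * hc z hz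

lemma contDiff_conj_pow_mul_pow (a b : ℕ) : ContDiff ℝ 1 fun w : ℂ => conj w ^ a * w ^ b :=
  (conjCLE.contDiff.pow a).mul (contDiff_id.pow b)

lemma conj_pow_mul_pow_eq (a b : ℕ) :
    (fun w : ℂ => conj w ^ a * w ^ b) = (fun w => conj (w ^ a)) * fun w => w ^ b := by
  ext w
  simp

lemma differentiableAt_conj_pow (a : ℕ) (z : ℂ) :
    DifferentiableAt ℝ (fun w : ℂ => conj (w ^ a)) z :=
  conjCLE.differentiableAt.comp z ((differentiableAt_pow (𝕜 := ℂ) a).restrictScalars ℝ)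

lemma ddz_conj_pow_mul_pow (a b : ℕ) (z : ℂ) :
    ddz (fun w => conj w ^ a * w ^ b) z = b * conj z ^ a * z ^ (b - 1) := by
  have hpow : ∀ n : ℕ, DifferentiableAt ℂ (fun w : ℂ => w ^ n) z := fun _ => differentiableAt_pow _
  rw [conj_pow_mul_pow_eq, ddz_mul (differentiableAt_conj_pow a z) ((hpow b).restrictScalars ℝ),
    ddz_conj ((hpow a).restrictScalars ℝ), dbar_eq_zero (hpow a), ddz_eq_deriv (hpow b),
    (hasDerivAt_pow b z).deriv]
  simp
  ring

lemma dbar_conj_pow_mul_pow (a b : ℕ) (z : ℂ) :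
    dbar (fun w => conj w ^ a * w ^ b) z = a * conj z ^ (a - 1) * z ^ b := by
  have hpow : ∀ n : ℕ, DifferentiableAt ℂ (fun w : ℂ => w ^ n) z := fun _ => differentiableAt_pow _
  rw [conj_pow_mul_pow_eq, dbar_mul (differentiableAt_conj_pow a z) ((hpow b).restrictScalars ℝ),
    dbar_conj ((hpow a).restrictScalars ℝ), dbar_eq_zero (hpow b), ddz_eq_deriv (hpow a),
    (hasDerivAt_pow a z).deriv]
  simp

lemma setIntegral_mul_conj_pow_mul_pow_eq_zero {c : ℕ → ℂ → ℂ}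
    (hΩo : IsOpen Ω) (hΩb : Bornology.IsBounded Ω) (hΩc : Convex ℝ Ω)
    (hc : ∀ j, ContinuousOn (c j) (closure Ω)) (hc' : ∀ j, ContDiffOn ℝ 1 (c j) Ω)
    (hchain : ∀ j, ∀ z ∈ Ω, ddz (c j) z + dbar (c (j + 1)) z = 0)
    (hc0 : ∀ j, ∀ z ∈ frontier Ω, c j z = 0) (a : ℕ) :
    ∀ b j, ∫ z in Ω, c j z * conj z ^ a * z ^ b = 0 := by
  have hint : ∀ j a b, IntegrableOn (fun z => c j z * conj z ^ a * z ^ b) Ω := fun j a b =>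
    integrableOn_of_continuousOn_closure hΩb <|
      ((hc j).mul (Complex.continuous_conj.pow a).continuousOn).mul (continuous_pow b).continuousOn
  -- `a - 1` truncates at `a = 0`, where its coefficient vanishes.
  have hrec : ∀ a b j : ℕ, ((b : ℂ) + 1) * (∫ z in Ω, c j z * conj z ^ a * z ^ b) +
      a * ∫ z in Ω, c (j + 1) z * conj z ^ (a - 1) * z ^ (b + 1) = 0 := fun a b j => by
    have := setIntegral_mul_ddz_add_mul_dbar_eq_zero hΩo hΩb hΩc (hc j) (hc (j + 1)) (hc' j)
      (hc' (j + 1)) (hchain j) (hc0 j) (hc0 (j + 1)) (contDiff_conj_pow_mul_pow a (b + 1))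
    simp only [ddz_conj_pow_mul_pow, dbar_conj_pow_mul_pow, Nat.add_sub_cancel] at this
    rw [← integral_const_mul, ← integral_const_mul,
      ← integral_add ((hint _ _ _).const_mul _) ((hint _ _ _).const_mul _), ← this]
    congr 1
    ext z
    push_cast
    ring
  induction a with
  | zero =>
    intro b j
    simpa [Nat.cast_add_one_ne_zero] using hrec 0 b j
  | succ a ih =>
    intro b j
    simpa [ih (b + 1) (j + 1), Nat.cast_add_one_ne_zero] using hrec (a + 1) b j

end Moments

section StoneWeierstrass

variable {K Ω : Set ℂ} {f : ℂ → ℂ}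

open Classical in
def extendByZero (K : Set ℂ) (g : C(K, ℂ)) (z : ℂ) : ℂ := if hz : z ∈ K then g ⟨z, hz⟩ else 0

lemma extendByZero_of_mem (g : C(K, ℂ)) {z : ℂ} (hz : z ∈ K) :
    extendByZero K g z = g ⟨z, hz⟩ := by
  simp [extendByZero, hz]

lemma continuousOn_extendByZero (g : C(K, ℂ)) : ContinuousOn (extendByZero K g) K := by
  rw [continuousOn_iff_continuous_domRestrict]
  convert g.continuous
  ext z
  exact extendByZero_of_mem g z.2

variable [CompactSpace K]

lemma integrableOn_mul_extendByZero (hΩK : Ω ⊆ K) (hf : ContinuousOn f K) (g : C(K, ℂ)) :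
    IntegrableOn (fun z => f z * extendByZero K g z) Ω :=
  ((hf.mul (continuousOn_extendByZero g)).integrableOn_compact
    (isCompact_iff_compactSpace.2 ‹_›)).mono_set hΩK

def integralMulCLM (hΩK : Ω ⊆ K) (hf : ContinuousOn f K) : C(K, ℂ) →L[ℂ] ℂ :=
  LinearMap.mkContinuous
    { toFun := fun g => ∫ z in Ω, f z * extendByZero K g z
      map_add' := fun g h => by
        rw [← integral_add (integrableOn_mul_extendByZero hΩK hf g)
          (integrableOn_mul_extendByZero hΩK hf h)]
        congr 1
        ext z
        unfold extendByZero
        split_ifs <;> simp [mul_add]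
      map_smul' := fun c g => by
        rw [RingHom.id_apply, smul_eq_mul, ← integral_const_mul]
        congr 1
        ext z
        unfold extendByZero
        split_ifs <;> simp only [ContinuousMap.smul_apply, smul_eq_mul, mul_zero]
        ring }
    (∫ z in Ω, ‖f z‖) fun g => by
      show ‖∫ z in Ω, f z * extendByZero K g z‖ ≤ (∫ z in Ω, ‖f z‖) * ‖g‖
      rw [← integral_mul_const]
      refine norm_integral_le_of_norm_le
        (((hf.norm.integrableOn_compact (isCompact_iff_compactSpace.2 ‹_›)).mono_set
          hΩK).mul_const _)
        (Eventually.of_forall fun z => ?_)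
      rw [norm_mul]
      gcongr
      unfold extendByZero
      split_ifs
      · exact g.norm_coe_le_norm _
      · simp

lemma integralMulCLM_apply (hΩK : Ω ⊆ K) (hf : ContinuousOn f K) (g : C(K, ℂ)) :
    integralMulCLM hΩK hf g = ∫ z in Ω, f z * extendByZero K g z := rfl

lemma integralMulCLM_eq_zero (hΩm : MeasurableSet Ω) (hΩK : Ω ⊆ K) (hf : ContinuousOn f K)
    (h : ∀ a b : ℕ, ∫ z in Ω, f z * conj z ^ a * z ^ b = 0) (g : C(K, ℂ)) :
    integralMulCLM hΩK hf g = 0 := by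
  set X : C(K, ℂ) := (ContinuousMap.id ℂ).restrict K
  have hker : Subalgebra.toSubmodule (StarAlgebra.adjoin ℂ {X}).toSubalgebra ≤
      LinearMap.ker (integralMulCLM hΩK hf).toLinearMap := by
    rw [StarAlgebra.adjoin_toSubalgebra, Set.star_singleton, Set.singleton_union,
      Algebra.adjoin_eq_span, Submodule.span_le]
    intro _ hx
    obtain ⟨m, n, rfl⟩ := (Submonoid.mem_closure_pair _ _ _).1 hx
    rw [SetLike.mem_coe, LinearMap.mem_ker, ContinuousLinearMap.coe_coe, integralMulCLM_apply,
      ← h n m]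
    refine setIntegral_congr_fun hΩm fun z hz => ?_
    rw [extendByZero_of_mem _ (hΩK hz)]
    simp [X]
    ring
  have hg : g ∈ closure (StarAlgebra.adjoin ℂ {X} : Set C(K, ℂ)) := by
    rw [← StarSubalgebra.topologicalClosure_coe, ← StarAlgebra.elemental,
      ContinuousMap.elemental_id_eq_top]
    trivial
  exact closure_minimal (fun x hx => hker hx) (integralMulCLM hΩK hf).isClosed_ker hg

end StoneWeierstrass

lemma eqOn_zero_of_moments_eq_zero {Ω : Set ℂ} {f : ℂ → ℂ} (hΩo : IsOpen Ω)
    (hΩb : Bornology.IsBounded Ω) (hf : ContinuousOn f (closure Ω))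
    (h : ∀ a b : ℕ, ∫ z in Ω, f z * conj z ^ a * z ^ b = 0) : EqOn f 0 Ω := by
  have : CompactSpace (closure Ω) := isCompact_iff_compactSpace.1 hΩb.isCompact_closure
  have hf' : ContinuousOn (fun z => conj (f z)) (closure Ω) :=
    Complex.continuous_conj.comp_continuousOn hf
  have h0 := integralMulCLM_eq_zero hΩo.measurableSet subset_closure hf h
    ⟨(closure Ω).domRestrict fun z => conj (f z), hf'.domRestrict⟩
  have hsq : ∫ z in Ω, normSq (f z) = 0 := by
    rw [integralMulCLM_apply, setIntegral_congr_fun hΩo.measurableSet fun z hz => by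
      rw [extendByZero_of_mem _ (subset_closure hz)]; exact mul_conj (f z),
      integral_complex_ofReal] at h0
    exact_mod_cast h0
  have hae := (integral_eq_zero_iff_of_nonneg (fun z => normSq_nonneg (f z))
    (integrableOn_of_continuousOn_closure hΩb (continuous_normSq.comp_continuousOn hf))).1 hsq
  intro z hz
  simpa using Measure.eqOn_open_of_ae_eq hae hΩo
    (continuous_normSq.comp_continuousOn (hf.mono subset_closure)) continuousOn_const hz

theorem eqOn_zero_of_ddz_add_dbar_succ_eq_zero {Ω : Set ℂ} {c : ℕ → ℂ → ℂ}
    (hΩo : IsOpen Ω) (hΩb : Bornology.IsBounded Ω) (hΩc : Convex ℝ Ω)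
    (hc : ∀ j, ContinuousOn (c j) (closure Ω)) (hc' : ∀ j, ContDiffOn ℝ 1 (c j) Ω)
    (hchain : ∀ j, ∀ z ∈ Ω, ddz (c j) z + dbar (c (j + 1)) z = 0)
    (hc0 : ∀ j, ∀ z ∈ frontier Ω, c j z = 0) (j : ℕ) : EqOn (c j) 0 Ω :=
  eqOn_zero_of_moments_eq_zero hΩo hΩb (hc j) fun a b =>
    setIntegral_mul_conj_pow_mul_pow_eq_zero hΩo hΩb hΩc hc hc' hchain hc0 a b j

lemma SeqContLinf.continuousOn {S : Set ℂ} {v : ℕ → ℂ → ℂ} (h : SeqContLinf S v) (n : ℕ) :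
    ContinuousOn (v n) S := fun z hz =>
  Metric.continuousWithinAt_iff.2 fun ε hε =>
    let ⟨δ, hδ, hv⟩ := h.2 z hz ε hε
    ⟨δ, hδ, fun w hw hwz => by rw [dist_eq_norm]; exact hv w hw hwz n⟩

/-- `oddAug u m` is the augmented sequence `u^{2m−1} = ⟨u_{2m−1}, …, u₁, u₋₁, u₋₃, …⟩`. -/
def oddAug (u : ℤ → ℂ → ℂ) (m : ℕ) : ℕ → ℂ → ℂ := fun n z =>
  if (n : ℤ) < (m : ℤ) then u (2 * ((m : ℤ) - (n : ℤ)) - 1) z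
  else u (-(2 * ((n : ℤ) - (m : ℤ)) + 1)) z

lemma oddAug_succ_succ (u : ℤ → ℂ → ℂ) (m n : ℕ) : oddAug u (m + 1) (n + 1) = oddAug u m n := by
  ext z
  simp [oddAug]

lemma oddAug_zero (u : ℤ → ℂ → ℂ) {m : ℕ} (hm : 1 ≤ m) : oddAug u m 0 = u (2 * m - 1) := by
  ext z
  simp [oddAug, show 0 < m by omega]

lemma oddAug_one (u : ℤ → ℂ → ℂ) {m : ℕ} (hm : 1 ≤ m) : oddAug u 1 m = u (-(2 * m - 1)) := by
  ext z
  simp only [oddAug, Nat.cast_one, if_neg (show ¬(m : ℤ) < 1 by omega)]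
  ring_nf

theorem eqOn_conj_of_isLkAnalytic_oddAug {Ω : Set ℂ} {u : ℤ → ℂ → ℂ}
    (hΩo : IsOpen Ω) (hΩb : Bornology.IsBounded Ω) (hΩc : Convex ℝ Ω)
    (hLa : ∀ m : ℕ, 1 ≤ m → IsLkAnalytic 1 Ω (oddAug u m))
    (htr : ∀ j : ℕ, ∀ ζ ∈ frontier Ω, oddAug u (j + 1) 0 ζ = conj (oddAug u 1 (j + 1) ζ))
    (j : ℕ) : EqOn (oddAug u (j + 1) 0) (fun z => conj (oddAug u 1 (j + 1) z)) Ω := by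
  have hP : ∀ j : ℕ, IsLkAnalytic 1 Ω (oddAug u (j + 1)) := fun j => hLa (j + 1) (by omega)
  have hN : IsLkAnalytic 1 Ω (oddAug u 1) := hLa 1 le_rfl
  have hd : ∀ {g : ℂ → ℂ}, ContDiffOn ℝ 1 g Ω → ∀ z ∈ Ω, DifferentiableAt ℝ g z := fun hg z hz =>
    (hg.differentiableOn one_ne_zero).differentiableAt (hΩo.mem_nhds hz)
  set c : ℕ → ℂ → ℂ := fun j => oddAug u (j + 1) 0 - fun z => conj (oddAug u 1 (j + 1) z)
  have hchain : ∀ j, ∀ z ∈ Ω, ddz (c j) z + dbar (c (j + 1)) z = 0 := by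
    intro j z hz
    have hdN : ∀ n, DifferentiableAt ℝ (fun w => conj (oddAug u 1 n w)) z := fun n =>
      conjCLE.differentiableAt.comp z (hd (hN.2.1 n) z hz)
    have hPz := (hP (j + 1)).2.2 0 z hz
    rw [oddAug_succ_succ] at hPz
    have hNz := congrArg conj (hN.2.2 (j + 1) z hz)
    rw [map_add, map_zero] at hNz
    rw [ddz_sub (hd ((hP j).2.1 0) z hz) (hdN _), dbar_sub (hd ((hP (j + 1)).2.1 0) z hz) (hdN _),
      ddz_conj (hd (hN.2.1 _) z hz), dbar_conj (hd (hN.2.1 _) z hz)]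
    linear_combination hPz - hNz
  intro z hz
  refine sub_eq_zero.1 (eqOn_zero_of_ddz_add_dbar_succ_eq_zero hΩo hΩb hΩc
    (fun j => ((hP j).1.continuousOn 0).sub
      (Complex.continuous_conj.comp_continuousOn (hN.1.continuousOn (j + 1))))
    (fun j => ((hP j).2.1 0).sub (conjCLE.contDiff.comp_contDiffOn (hN.2.1 (j + 1))))
    hchain (fun j ζ hζ => sub_eq_zero.2 (htr j ζ hζ)) j hz)

theorem conj_identity_of_LAnalytic_traces_general
    (Ω : Set ℂ) (hΩo : IsOpen Ω) (hΩb : Bornology.IsBounded Ω)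
    (hΩsc : StrictConvex ℝ Ω)
    (u : ℤ → ℂ → ℂ)
    (hLa : ∀ m : ℕ, 1 ≤ m → IsLkAnalytic 1 Ω (fun n z =>
      if (n : ℤ) < (m : ℤ) then u (2 * ((m : ℤ) - (n : ℤ)) - 1) z
      else u (-(2 * ((n : ℤ) - (m : ℤ)) + 1)) z))
    (htr : ∀ m : ℕ, 1 ≤ m → ∀ ζ ∈ frontier Ω,
      u (2 * (m : ℤ) - 1) ζ = (starRingEnd ℂ) (u (-(2 * (m : ℤ) - 1)) ζ)) :
    ∀ m : ℕ, 1 ≤ m → ∀ z ∈ Ω,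
      u (2 * (m : ℤ) - 1) z = (starRingEnd ℂ) (u (-(2 * (m : ℤ) - 1)) z) := by
  intro m hm z hz
  obtain ⟨j, rfl⟩ := Nat.exists_eq_add_of_le' hm
  have key := eqOn_conj_of_isLkAnalytic_oddAug (u := u) hΩo hΩb hΩsc.convex hLa
    (fun j ζ hζ => by
      rw [oddAug_zero u (by omega), oddAug_one u (by omega)]
      exact htr (j + 1) (by omega) ζ hζ) j hz
  rwa [oddAug_zero u hm, oddAug_one u hm] at key

/-- Lemma 2.5. Let `u_k : ℂ → ℂ` (for odd `k ∈ ℤ`) be fixed, and for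
`m ≥ 1` let `u^{2m−1} = ⟨u_{2m−1}, u_{2m−3}, …, u₁, u₋₁, u₋₃, …⟩` be the augmented
sequence. If every `u^{2m−1}` is `L`-analytic and the boundary traces satisfy
`u_{2m−1}|_Γ = conj(u_{−(2m−1)})|_Γ` for every `m ≥ 1`, then
`u_{2m−1} = conj(u_{−(2m−1)})` throughout `Ω`. -/
theorem conj_identity_of_LAnalytic_traces
    (Ω : Set ℂ) (hΩo : IsOpen Ω) (hΩb : Bornology.IsBounded Ω)
    (hΩsc : StrictConvex ℝ Ω) (hΩne : Ω.Nonempty)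
    (u : ℤ → ℂ → ℂ)
    (hLa : ∀ m : ℕ, 1 ≤ m → IsLkAnalytic 1 Ω (fun n z =>
      if (n : ℤ) < (m : ℤ) then u (2 * ((m : ℤ) - (n : ℤ)) - 1) z
      else u (-(2 * ((n : ℤ) - (m : ℤ)) + 1)) z))
    (htr : ∀ m : ℕ, 1 ≤ m → ∀ ζ ∈ frontier Ω,
      u (2 * (m : ℤ) - 1) ζ = (starRingEnd ℂ) (u (-(2 * (m : ℤ) - 1)) ζ)) :
    ∀ m : ℕ, 1 ≤ m → ∀ z ∈ Ω,
      u (2 * (m : ℤ) - 1) z = (starRingEnd ℂ) (u (-(2 * (m : ℤ) - 1)) z) :=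
  conj_identity_of_LAnalytic_traces_general Ω hΩo hΩb hΩsc u hLa htr

end RangeDoppler
end
end

section
/- Let a ∈ C¹(Ω) ∩ C(Ω̄) be real valued with a > 0 in Ω, and let f ∈ C¹(Ω) ∩ C(Ω̄) be real valued with f/a ∈ C₀(Ω̄) (i.e. f/a extends continuously to Ω̄ and vanishes on Γ). Define the real valued vector field F := −∇(f/a). Then the attenuated Doppler data of F equals the attenuated X-ray data of f: if g is the trace on Γ × S¹ of a solution w of θ·∇w + aw = f in Ω × S¹ (so g ∈ R_af), then g is also the trace of a solution u of θ·∇u + au = θ·F (so g ∈ D_aF). -/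
/-!
If `w` solves `θ·∇w + aw = f`, then `u := w − f/a` solves `θ·∇u + au = −θ·∇(f/a)`, because
`a · (f/a) = f`; and `u = w` on `Γ` because `f/a` vanishes there, so `u` and `w` have the
same trace.
-/

noncomputable section

open Complex MeasureTheory Filter Topology Metric Set

namespace RangeDoppler

theorem fderiv_apply_eq_dotJ_gradC (q : ℂ → ℝ) (x θ : ℂ) :
    fderiv ℝ q x θ = dotJ θ (gradC q x) := by
  have hθ : θ = θ.re • (1 : ℂ) + θ.im • I := by simp
  conv_lhs => rw [hθ]
  simp only [map_add, map_smul, smul_eq_mul, dotJ, gradC, add_re, add_im, mul_re, mul_im,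
    ofReal_re, ofReal_im, I_re, I_im]
  ring

theorem dotJ_neg (θ v : ℂ) : dotJ θ (-v) = -dotJ θ v := by
  simp only [dotJ, neg_re, neg_im]
  ring

theorem IsTraceOfTransportSolution.sub_of_eq_zero_on_frontier {Ω : Set ℂ} (hΩ : IsOpen Ω)
    {a : ℂ → ℝ} {rhs rhs' g : ℂ → ℂ → ℝ} (hg : IsTraceOfTransportSolution Ω a rhs g)
    {q : ℂ → ℝ} (hqc : ContinuousOn q (closure Ω)) (hqd : DifferentiableOn ℝ q Ω)
    (hq0 : ∀ ζ ∈ frontier Ω, q ζ = 0)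
    (hrhs : ∀ θ ∈ sphere (0 : ℂ) 1, ∀ x ∈ Ω,
      rhs' x θ = rhs x θ - (fderiv ℝ q x θ + a x * q x)) :
    IsTraceOfTransportSolution Ω a rhs' g := by
  obtain ⟨w, hw_reg, hw_eq, hw_trace⟩ := hg
  refine ⟨fun x θ => w x θ - q x, fun θ hθ => ?_, fun θ hθ x hx => ?_, fun ζ hζ θ hθ => ?_⟩
  · exact ⟨(hw_reg θ hθ).1.sub hqc, (hw_reg θ hθ).2.sub hqd⟩
  · have hwx : DifferentiableAt ℝ (fun y => w y θ) x :=
      (hw_reg θ hθ).2.differentiableAt (hΩ.mem_nhds hx)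
    have hqx : DifferentiableAt ℝ q x := hqd.differentiableAt (hΩ.mem_nhds hx)
    rw [fderiv_fun_sub hwx hqx, hrhs θ hθ x hx, ← hw_eq θ hθ x hx]
    simp only [sub_apply]
    ring
  · simp only [hw_trace ζ hζ θ hθ, hq0 ζ hζ, sub_zero]

theorem xray_data_is_doppler_data_of_gradient_general
    (Ω : Set ℂ) (hΩo : IsOpen Ω)
    (a : ℂ → ℝ) (ha1 : ContDiffOn ℝ 1 a Ω)
    (hapos : ∀ x ∈ Ω, 0 < a x)
    (f : ℂ → ℝ) (hf1 : ContDiffOn ℝ 1 f Ω)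
    (hfa : ContinuousOn (fun y => f y / a y) (closure Ω))
    (hfa0 : ∀ ζ ∈ frontier Ω, f ζ / a ζ = 0)
    (g : ℂ → ℂ → ℝ)
    (hg : IsTraceOfTransportSolution Ω a (fun x _ => f x) g) :
    IsTraceOfTransportSolution Ω a
      (fun x θ => dotJ θ (-gradC (fun y => f y / a y) x)) g := by
  have hfa_diff : DifferentiableOn ℝ (fun y => f y / a y) Ω := by
    simp only [div_eq_mul_inv]
    exact (hf1.differentiableOn one_ne_zero).fun_mul
      ((ha1.differentiableOn one_ne_zero).fun_inv fun x hx => (hapos x hx).ne')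
  refine hg.sub_of_eq_zero_on_frontier hΩo hfa hfa_diff hfa0 fun θ _ x hx => ?_
  rw [fderiv_apply_eq_dotJ_gradC, dotJ_neg, mul_div_cancel₀ _ (hapos x hx).ne']
  ring

/-- Theorem 5.1 (i). Let `a ∈ C¹(Ω) ∩ C(Ω̄)` be real valued with
`a > 0` in `Ω`, and let `f ∈ C¹(Ω) ∩ C(Ω̄)` be real valued with `f/a ∈ C₀(Ω̄)`. Then the
vector field `F := −∇(f/a)` has the same attenuated Doppler data as the attenuated X-ray
data of `f`: if `g` is the trace on `Γ × S¹` of a solution `w` of `θ·∇w + aw = f`, then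
`g` is also the trace of a solution `u` of `θ·∇u + au = θ·F`. -/
theorem xray_data_is_doppler_data_of_gradient
    (Ω : Set ℂ) (hΩo : IsOpen Ω) (hΩb : Bornology.IsBounded Ω)
    (hΩsc : StrictConvex ℝ Ω) (hΩne : Ω.Nonempty)
    (a : ℂ → ℝ) (ha1 : ContDiffOn ℝ 1 a Ω) (ha2 : ContinuousOn a (closure Ω))
    (hapos : ∀ x ∈ Ω, 0 < a x)
    (f : ℂ → ℝ) (hf1 : ContDiffOn ℝ 1 f Ω) (hf2 : ContinuousOn f (closure Ω))
    (hfa : ContinuousOn (fun y => f y / a y) (closure Ω))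
    (hfa0 : ∀ ζ ∈ frontier Ω, f ζ / a ζ = 0)
    (g : ℂ → ℂ → ℝ)
    (hg : IsTraceOfTransportSolution Ω a (fun x _ => f x) g) :
    IsTraceOfTransportSolution Ω a
      (fun x θ => dotJ θ (-gradC (fun y => f y / a y) x)) g :=
  xray_data_is_doppler_data_of_gradient_general Ω hΩo a ha1 hapos f hf1 hfa hfa0 g hg

end RangeDoppler
end
end
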